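/- Let I and J be monomial ideals in S = K[x_1,…,x_n]. Then the polarization of their intersection equals the intersection of their polarizations: (I ∩ J)^p = I^p ∩ J^p (in a common polynomial ring extension T containing both polarizations). -/

import Mathlib

open MvPolynomial

/-- The monomial `x^a` in `K[x_i : i ∈ σ]`. -/
noncomputable def mono (K : Type*) [Field K] {σ : Type*} (a : σ →₀ ℕ) :
    MvPolynomial σ K :=
  MvPolynomial.monomial a 1

/-- An ideal is a monomial ideal if it is generated by monomials. -/
def IsMonomialIdeal {K : Type*} [Field K] {σ : Type*}
    (I : Ideal (MvPolynomial σ K)) : Prop :=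
  ∃ A : Set (σ →₀ ℕ), I = Ideal.span ((fun a => mono K a) '' A)

/-- The exponent vector of the polarization `u^p = ∏ᵢ ∏_{j<aᵢ} x_{ij}` of the
monomial `u = ∏ᵢ xᵢ^{aᵢ}`: the squarefree exponent supported on
`{(i,j) : j < a i}`, in the variables of `T = K[x_{ij}]`. -/
noncomputable def polarExp {n : ℕ} (a : Fin n →₀ ℕ) : (Fin n × ℕ) →₀ ℕ :=
  Finsupp.indicator
    (a.support.biUnion fun i => (Finset.range (a i)).image fun j => (i, j))
    (fun _ _ => 1)

/-- The polarization `I^p ⊂ T = K[x_{ij}]` of a monomial ideal `I ⊂ S`: the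
ideal generated by the polarizations of the monomials of `I` (for a monomial
ideal this is the ideal generated by the polarizations of any set of monomial
generators). -/
noncomputable def polarIdeal {K : Type*} [Field K] {n : ℕ}
    (I : Ideal (MvPolynomial (Fin n) K)) : Ideal (MvPolynomial (Fin n × ℕ) K) :=
  Ideal.span ((fun a => mono K (polarExp a)) '' {a : Fin n →₀ ℕ | mono K a ∈ I})

/- The monomials of `(I ∩ J)^p` are the polarizations of the monomials `u` lying in both
`I` and `J`. Conversely, if a monomial `w` of `T` is divisible by `u^p` and by `v^p` for
monomials `u ∈ I` and `v ∈ J`, then it is divisible by `lcm(u^p, v^p) = lcm(u, v)^p`, and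
`lcm(u, v) ∈ I ∩ J`. This suffices because a polynomial lies in an ideal generated by
monomials iff each of its monomials is divisible by one of the generators. -/

lemma polarExp_apply {n : ℕ} (a : Fin n →₀ ℕ) (x : Fin n × ℕ) :
    polarExp a x = if x.2 < a x.1 then 1 else 0 := by
  obtain ⟨i, j⟩ := x
  unfold polarExp
  by_cases h : j < a i
  · rw [Finsupp.indicator_of_mem, if_pos h]
    simp only [Finset.mem_biUnion, Finset.mem_image, Finset.mem_range, Finsupp.mem_support_iff]
    exact ⟨i, by omega, j, h, rfl⟩
  · rw [Finsupp.indicator_of_notMem, if_neg h]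
    simp only [Finset.mem_biUnion, Finset.mem_image, Finset.mem_range, not_exists, not_and]
    rintro i' - j' hj' hij
    obtain ⟨rfl, rfl⟩ := Prod.mk.inj hij
    exact h hj'

lemma polarExp_sup {n : ℕ} (a b : Fin n →₀ ℕ) :
    polarExp (a ⊔ b) = polarExp a ⊔ polarExp b := by
  ext x
  simp only [Finsupp.sup_apply, polarExp_apply, lt_sup_iff]
  split_ifs <;> simp_all

lemma mono_mem_of_le {K : Type*} [Field K] {σ : Type*} {I : Ideal (MvPolynomial σ K)}
    {a b : σ →₀ ℕ} (ha : mono K a ∈ I) (hab : a ≤ b) : mono K b ∈ I := by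
  have hfactor : mono K b = mono K (b - a) * mono K a := by
    simp only [mono, monomial_mul, mul_one, tsub_add_cancel_of_le hab]
  rw [hfactor]
  exact I.mul_mem_left _ ha

lemma mem_polarIdeal {K : Type*} [Field K] {n : ℕ} (I : Ideal (MvPolynomial (Fin n) K))
    (f : MvPolynomial (Fin n × ℕ) K) :
    f ∈ polarIdeal I ↔ ∀ c ∈ f.support, ∃ a, mono K a ∈ I ∧ polarExp a ≤ c := by
  rw [polarIdeal, show (fun a => mono K (polarExp a)) '' {a | mono K a ∈ I} =
      (fun e => monomial e (1 : K)) '' (polarExp '' {a | mono K a ∈ I}) from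
      (Set.image_image _ _ _).symm, mem_ideal_span_monomial_image]
  simp only [Set.mem_image, Set.mem_ofPred_eq, exists_exists_and_eq_and]

lemma polarIdeal_mono {K : Type*} [Field K] {n : ℕ} {I J : Ideal (MvPolynomial (Fin n) K)}
    (hIJ : I ≤ J) : polarIdeal I ≤ polarIdeal J :=
  Ideal.span_mono (Set.image_mono fun _ ha => hIJ ha)

theorem polarIdeal_inf_general {K : Type*} [Field K] {n : ℕ}
    (I J : Ideal (MvPolynomial (Fin n) K)) :
    polarIdeal (I ⊓ J) = polarIdeal I ⊓ polarIdeal J := by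
  refine le_antisymm (le_inf (polarIdeal_mono inf_le_left) (polarIdeal_mono inf_le_right)) ?_
  rintro f ⟨hfI, hfJ⟩
  rw [SetLike.mem_coe, mem_polarIdeal] at hfI hfJ
  rw [mem_polarIdeal]
  intro c hc
  obtain ⟨a, haI, hac⟩ := hfI c hc
  obtain ⟨b, hbJ, hbc⟩ := hfJ c hc
  refine ⟨a ⊔ b, ⟨mono_mem_of_le haI le_sup_left, mono_mem_of_le hbJ le_sup_right⟩, ?_⟩
  rw [polarExp_sup]
  exact sup_le hac hbc

/-- Polarization commutes with intersections of monomial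
ideals: `(I ∩ J)^p = I^p ∩ J^p`. -/
theorem polarIdeal_inf {K : Type*} [Field K] {n : ℕ}
    (I J : Ideal (MvPolynomial (Fin n) K))
    (hI : IsMonomialIdeal I) (hJ : IsMonomialIdeal J) :
    polarIdeal (I ⊓ J) = polarIdeal I ⊓ polarIdeal J :=
  polarIdeal_inf_general I J
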